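/- arXiv:2412.18478 — 3 statements merged into one kernel-verified Lean document; each statement's English description precedes it below -/
import Mathlib

section
/- Let M = T*Q × ℝ with coordinates (q^i, p_i, S), H : M → ℝ with ∂H/∂S nowhere zero, F^fr = F^fr_i dq^i a semibasic 1-form, η = −(∂H/∂S) dS − F^fr, and ω = dq^i ∧ dp_i the pullback of the canonical symplectic form. Then (ω, η) is a partially cosymplectic structure on M, i.e., ω is closed and ω^n ∧ η ≠ 0, regardless of the expression of F^fr. -/
open scoped TensorProduct

/-- Wedge product of real-valued alternating forms. -/
noncomputable def aWedge {V : Type*} [AddCommGroup V] [Module ℝ V] {m k : ℕ}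
    (a : V [⋀^Fin m]→ₗ[ℝ] ℝ) (b : V [⋀^Fin k]→ₗ[ℝ] ℝ) :
    V [⋀^Fin (m + k)]→ₗ[ℝ] ℝ :=
  ((TensorProduct.lid ℝ ℝ).toLinearMap.compAlternatingMap
    (AlternatingMap.domCoprod a b)).domDomCongr finSumFinEquiv

/-- A linear form regarded as an alternating 1-form. -/
noncomputable def oneForm {V : Type*} [AddCommGroup V] [Module ℝ V]
    (f : V →ₗ[ℝ] ℝ) : V [⋀^Fin 1]→ₗ[ℝ] ℝ :=
  AlternatingMap.ofSubsingleton ℝ V ℝ (0 : Fin 1) f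

/-- `n`-th wedge power of a 2-form. -/
noncomputable def aPow {V : Type*} [AddCommGroup V] [Module ℝ V]
    (ω : V [⋀^Fin 2]→ₗ[ℝ] ℝ) : (n : ℕ) → V [⋀^Fin (2 * n)]→ₗ[ℝ] ℝ
  | 0 => AlternatingMap.constOfIsEmpty ℝ V (Fin 0) 1
  | n + 1 => (aWedge (aPow ω n) ω).domDomCongr (finCongr (by ring))

/-- `ω^n ∧ η₁ ∧ ⋯ ∧ η_p`. -/
noncomputable def volForm {V : Type*} [AddCommGroup V] [Module ℝ V]
    (ω : V [⋀^Fin 2]→ₗ[ℝ] ℝ) (n : ℕ) :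
    (p : ℕ) → (Fin p → (V →ₗ[ℝ] ℝ)) → V [⋀^Fin (2 * n + p)]→ₗ[ℝ] ℝ
  | 0, _ => aPow ω n
  | p + 1, η => aWedge (m := 2 * n + p) (k := 1) (volForm ω n p (fun i => η i.castSucc)) (oneForm (η (Fin.last p)))

/-- The phase space `T*Q × ℝ` (resp. `TQ × ℝ`) in global Darboux coordinates
`(qⁱ, pᵢ, z)` (resp. `(qⁱ, q̇ⁱ, z)`). -/
abbrev Phase (n : ℕ) : Type := (Fin n → ℝ) × (Fin n → ℝ) × ℝ

/-- Exterior derivative of a 1-form field on a normed space. -/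
noncomputable def extDerOneL {E : Type*} [NormedAddCommGroup E] [NormedSpace ℝ E]
    (η : E → (E →ₗ[ℝ] ℝ)) (x u v : E) : ℝ :=
  fderiv ℝ (fun y => η y v) x u - fderiv ℝ (fun y => η y u) x v

/-- Exterior derivative of a 2-form field on a normed space. -/
noncomputable def extDerTwo {E : Type*} [NormedAddCommGroup E] [NormedSpace ℝ E]
    (ω : E → (E [⋀^Fin 2]→ₗ[ℝ] ℝ)) (x u v w : E) : ℝ :=
  fderiv ℝ (fun y => ω y ![v, w]) x u - fderiv ℝ (fun y => ω y ![u, w]) x v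
    + fderiv ℝ (fun y => ω y ![u, v]) x w

set_option linter.unusedSectionVars false
namespace Stmt12
open Equiv AlternatingMap

variable {V : Type*} [AddCommGroup V] [Module ℝ V]

lemma aWedge_apply {m k : ℕ} (a : V [⋀^Fin m]→ₗ[ℝ] ℝ) (b : V [⋀^Fin k]→ₗ[ℝ] ℝ)
    (v : Fin (m + k) → V) :
    aWedge a b v = ∑ σ : Equiv.Perm.ModSumCongr (Fin m) (Fin k),
      (TensorProduct.lid ℝ ℝ) (domCoprod.summand a b σ (fun s => v (finSumFinEquiv s))) := by
  simp [aWedge, AlternatingMap.domDomCongr_apply, LinearMap.compAlternatingMap_apply,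
    AlternatingMap.domCoprod_apply, MultilinearMap.sum_apply, map_sum]
  rfl

set_option synthInstance.maxHeartbeats 1000000 in
lemma summand_apply {m k : ℕ} (a : V [⋀^Fin m]→ₗ[ℝ] ℝ) (b : V [⋀^Fin k]→ₗ[ℝ] ℝ)
    (σ : Equiv.Perm (Fin m ⊕ Fin k)) (v : Fin m ⊕ Fin k → V) :
    (TensorProduct.lid ℝ ℝ) (domCoprod.summand a b (Quotient.mk'' σ) v) =
      Equiv.Perm.sign σ • (a (fun i => v (σ (Sum.inl i))) * b (fun i => v (σ (Sum.inr i)))) := by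
  rw [domCoprod.summand_mk'']
  rw [MultilinearMap.smul_apply, Units.smul_def, map_zsmul]
  rw [MultilinearMap.domDomCongr_apply, MultilinearMap.domCoprod_apply]
  rw [TensorProduct.lid_tmul, Units.smul_def, smul_eq_mul]
  norm_num

/-- A permutation of a sum type sending `inr` into `inr` is a `sumCongr`. -/
lemma mem_sumCongrHom_range {α β : Type*} [Finite α] [Finite β] [DecidableEq α] [DecidableEq β]
    (τ : Equiv.Perm (α ⊕ β)) (h : ∀ b : β, ∃ b', τ (Sum.inr b) = Sum.inr b') :
    τ ∈ (Equiv.Perm.sumCongrHom α β).range := by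
  classical
  set g : β → β := fun b => (h b).choose with hg
  have hgspec : ∀ b, τ (Sum.inr b) = Sum.inr (g b) := fun b => (h b).choose_spec
  have hginj : Function.Injective g := by
    intro b b' hbb'
    have : τ (Sum.inr b) = τ (Sum.inr b') := by rw [hgspec, hgspec, hbb']
    exact Sum.inr_injective (τ.injective this)
  have hgsurj : Function.Surjective g := Finite.surjective_of_injective hginj
  have hA : ∀ a : α, ∃ a', τ (Sum.inl a) = Sum.inl a' := by
    intro a
    rcases hcase : τ (Sum.inl a) with a' | b'
    · exact ⟨a', rfl⟩
    · obtain ⟨b, hb⟩ := hgsurj b'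
      have : τ (Sum.inr b) = τ (Sum.inl a) := by rw [hgspec, hb, hcase]
      exact absurd (τ.injective this) (by simp)
  set f : α → α := fun a => (hA a).choose with hf
  have hfspec : ∀ a, τ (Sum.inl a) = Sum.inl (f a) := fun a => (hA a).choose_spec
  have hfinj : Function.Injective f := by
    intro a a' haa'
    have : τ (Sum.inl a) = τ (Sum.inl a') := by rw [hfspec, hfspec, haa']
    exact Sum.inl_injective (τ.injective this)
  refine ⟨(Equiv.ofBijective f ⟨hfinj, Finite.surjective_of_injective hfinj⟩,
    Equiv.ofBijective g ⟨hginj, hgsurj⟩), ?_⟩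
  ext s
  rcases s with a | b
  · simp [Equiv.Perm.sumCongrHom, hfspec a, Equiv.ofBijective]
  · simp [Equiv.Perm.sumCongrHom, hgspec b, Equiv.ofBijective]

/-- vanishing of a wedge when both factors kill a vector `g` appearing in the arguments -/
lemma aWedge_eq_zero {m k : ℕ} (a : V [⋀^Fin m]→ₗ[ℝ] ℝ) (b : V [⋀^Fin k]→ₗ[ℝ] ℝ) (g : V)
    (ha : ∀ w : Fin m → V, (∃ j, w j = g) → a w = 0)
    (hb : ∀ w : Fin k → V, (∃ j, w j = g) → b w = 0)
    (v : Fin (m + k) → V) (hv : ∃ j, v j = g) : aWedge a b v = 0 := by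
  rw [aWedge_apply]
  refine Finset.sum_eq_zero fun q _ => ?_
  refine Quotient.inductionOn' q fun σ => ?_
  obtain ⟨j, hj⟩ := hv
  rw [summand_apply]
  rcases hs : σ.symm (finSumFinEquiv.symm j) with i | i
  · have : a (fun i' => v (finSumFinEquiv (σ (Sum.inl i')))) = 0 := by
      refine ha _ ⟨i, ?_⟩
      rw [← hs, Equiv.apply_symm_apply, Equiv.apply_symm_apply, hj]
    rw [this, zero_mul, smul_zero]
  · have : b (fun i' => v (finSumFinEquiv (σ (Sum.inr i')))) = 0 := by
      refine hb _ ⟨i, ?_⟩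
      rw [← hs, Equiv.apply_symm_apply, Equiv.apply_symm_apply, hj]
    rw [this, mul_zero, smul_zero]


lemma oneForm_apply (f : V →ₗ[ℝ] ℝ) (w : Fin 1 → V) : oneForm f w = f (w 0) := rfl

set_option synthInstance.maxHeartbeats 1000000 in
/-- wedging with a 1-form, evaluated when the `m`-form kills the last vector -/
lemma aWedge_oneForm_apply {m : ℕ} (a : V [⋀^Fin m]→ₗ[ℝ] ℝ) (f : V →ₗ[ℝ] ℝ)
    (v : Fin (m + 1) → V)
    (ha : ∀ w : Fin m → V, (∃ j, w j = v (Fin.last m)) → a w = 0) :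
    aWedge a (oneForm f) v = a (fun i => v i.castSucc) * f (v (Fin.last m)) := by
  rw [aWedge_apply]
  refine (Finset.sum_eq_single (Quotient.mk'' (1 : Equiv.Perm (Fin m ⊕ Fin 1))) ?_ ?_).trans ?_
  rotate_left 2
  · rw [summand_apply]
    have h1 : ∀ i : Fin m, finSumFinEquiv (Sum.inl i : Fin m ⊕ Fin 1) = i.castSucc := by
      intro i; apply Fin.ext; simp
    have h2 : finSumFinEquiv (Sum.inr 0 : Fin m ⊕ Fin 1) = Fin.last m := by
      apply Fin.ext; simp
    simp only [Equiv.Perm.coe_one, id_eq, map_one, one_smul, oneForm_apply, h1, h2]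
  · intro q _ hq
    refine Quotient.inductionOn' q (fun σ hσ => ?_) hq
    rcases hcase : σ (Sum.inr 0) with i | b
    · -- then the `a` part contains `v (last m)`
      rw [summand_apply]
      rcases hs : σ.symm (Sum.inr 0) with i' | b'
      · have : a (fun i' => v (finSumFinEquiv (σ (Sum.inl i')))) = 0 := by
          refine ha _ ⟨i', ?_⟩
          rw [← hs, Equiv.apply_symm_apply]
          congr 1
        rw [this, zero_mul, smul_zero]
      · exfalso
        have hb' : b' = 0 := Subsingleton.elim _ _
        subst hb'
        have : σ (Sum.inr 0) = Sum.inr 0 := σ.apply_eq_iff_eq_symm_apply.mpr hs.symm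
        rw [hcase] at this; exact Sum.inl_ne_inr this
    · -- then σ is in the subgroup, contradiction with hσ
      exfalso
      apply hσ
      have hb : b = 0 := Subsingleton.elim _ _
      have hmem : σ ∈ (Equiv.Perm.sumCongrHom (Fin m) (Fin 1)).range := by
        refine mem_sumCongrHom_range σ (fun b'' => ?_)
        have : b'' = 0 := Subsingleton.elim _ _
        exact ⟨0, by rw [this, hcase, hb]⟩
      symm
      apply Quotient.sound'
      rw [QuotientGroup.leftRel_apply]
      simpa using hmem
  · intro h
    simp at h


/-- interleaving of two families -/
def interleave {M : ℕ} (x y : Fin M → V) : Fin (2 * M) → V := fun k =>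
  if _ : k.val % 2 = 0 then x ⟨k.val / 2, by have := k.isLt; omega⟩
  else y ⟨k.val / 2, by have := k.isLt; omega⟩

lemma interleave_even {M : ℕ} (x y : Fin M → V) (k : Fin (2 * M)) (a : Fin M)
    (ha : k.val = 2 * a.val) : interleave x y k = x a := by
  have h0 : k.val % 2 = 0 := by omega
  unfold interleave
  rw [dif_pos h0]
  congr 1
  exact Fin.ext (by simp; omega)

lemma interleave_odd {M : ℕ} (x y : Fin M → V) (k : Fin (2 * M)) (a : Fin M)
    (ha : k.val = 2 * a.val + 1) : interleave x y k = y a := by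
  have h0 : ¬ (k.val % 2 = 0) := by omega
  unfold interleave
  rw [dif_neg h0]
  congr 1
  exact Fin.ext (by simp; omega)

lemma fin2_eta (w : Fin 2 → V) : w = ![w 0, w 1] := by
  funext i; fin_cases i <;> rfl

lemma two_form_comm (ω : V [⋀^Fin 2]→ₗ[ℝ] ℝ) (u w : V) : ω ![u, w] = - ω ![w, u] := by
  have h := ω.map_swap (v := ![w, u]) (show (0 : Fin 2) ≠ 1 by decide)
  have h2 : (![w, u] ∘ Equiv.swap (0 : Fin 2) 1) = ![u, w] := by
    funext i; fin_cases i <;> simp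
  rw [h2] at h; exact h

lemma interleave_pair (ω : V [⋀^Fin 2]→ₗ[ℝ] ℝ) {M : ℕ} (x y : Fin M → V)
    (hxy : ∀ a b, ω ![x a, y b] = if a = b then 1 else 0)
    (hxx : ∀ a b, ω ![x a, x b] = 0) (hyy : ∀ a b, ω ![y a, y b] = 0)
    (k l : Fin (2 * M)) (h : ω ![interleave x y k, interleave x y l] ≠ 0) :
    (k.val % 2 = 0 ∧ l.val = k.val + 1) ∨ (l.val % 2 = 0 ∧ k.val = l.val + 1) := by
  have hk2 := k.isLt; have hl2 := l.isLt
  rcases Nat.even_or_odd k.val with ⟨a, ha⟩ | ⟨a, ha⟩ <;>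
    rcases Nat.even_or_odd l.val with ⟨b, hb⟩ | ⟨b, hb⟩
  · exfalso
    rw [interleave_even x y k ⟨a, by omega⟩ (show k.val = 2*a by omega),
        interleave_even x y l ⟨b, by omega⟩ (show l.val = 2*b by omega), hxx] at h
    exact h rfl
  · left
    rw [interleave_even x y k ⟨a, by omega⟩ (show k.val = 2*a by omega),
        interleave_odd x y l ⟨b, by omega⟩ (show l.val = 2*b+1 by omega), hxy] at h
    have hab : (⟨a, by omega⟩ : Fin M) = ⟨b, by omega⟩ := by
      by_contra hne
      rw [if_neg hne] at h
      exact h rfl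
    have : a = b := congrArg Fin.val hab
    omega
  · right
    rw [interleave_odd x y k ⟨a, by omega⟩ (show k.val = 2*a+1 by omega),
        interleave_even x y l ⟨b, by omega⟩ (show l.val = 2*b by omega),
        two_form_comm, hxy] at h
    have hab : (⟨b, by omega⟩ : Fin M) = ⟨a, by omega⟩ := by
      by_contra hne
      rw [if_neg hne] at h
      simp at h
    have : a = b := (congrArg Fin.val hab).symm
    omega
  · exfalso
    rw [interleave_odd x y k ⟨a, by omega⟩ (show k.val = 2*a+1 by omega),
        interleave_odd x y l ⟨b, by omega⟩ (show l.val = 2*b+1 by omega), hyy] at h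
    exact h rfl

lemma key_mod (M B ε : ℕ) (hε : ε < 2) (hM : 0 < M) :
    (2 * B + ε) % (2 * M) = 2 * (B % M) + ε := by
  conv_lhs => rw [← Nat.div_add_mod B M]
  have h1 : 2 * (M * (B / M) + B % M) + ε = (2 * (B % M) + ε) + (2 * M) * (B / M) := by ring
  rw [h1, Nat.add_mul_mod_self_left]
  exact Nat.mod_eq_of_lt (by have := Nat.mod_lt B hM; omega)

open scoped Fin.NatCast Fin.CommRing in
lemma finRotate_pow_apply (L d : ℕ) (k : Fin (L + 1)) :
    ((finRotate (L + 1)) ^ d) k = k + (d : Fin (L + 1)) := by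
  induction d with
  | zero => simp
  | succ d ih =>
    rw [pow_succ', Equiv.Perm.mul_apply, finRotate_succ_apply, ih]
    push_cast
    ring

open scoped Fin.NatCast Fin.CommRing in
lemma finRotate_pow_val (L d : ℕ) (hL : 0 < L) (k : Fin L) :
    (((finRotate L) ^ d) k).val = (k.val + d) % L := by
  obtain ⟨L', rfl⟩ : ∃ L', L = L' + 1 := ⟨L - 1, by omega⟩
  rw [finRotate_pow_apply, Fin.add_def, Fin.val_natCast]
  conv_rhs => rw [Nat.add_mod]
  rw [Nat.mod_eq_of_lt k.isLt]


set_option synthInstance.maxHeartbeats 1000000 in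
set_option maxHeartbeats 2000000 in
lemma aPow_interleave (ω : V [⋀^Fin 2]→ₗ[ℝ] ℝ) :
    ∀ (m : ℕ) (x y : Fin m → V),
      (∀ a b, ω ![x a, y b] = if a = b then 1 else 0) →
      (∀ a b, ω ![x a, x b] = 0) → (∀ a b, ω ![y a, y b] = 0) →
      aPow ω m (interleave x y) = (Nat.factorial m : ℝ) := by
  intro m
  induction m with
  | zero =>
    intro x y _ _ _
    simp [aPow, Nat.factorial]
  | succ m ih =>
    intro x y hxy hxx hyy
    -- the tuple with domain `Fin (2*m+2)`
    set t : Fin (2 * m + 2) → V :=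
      (fun k => interleave x y ⟨k.val, by have := k.isLt; omega⟩) with ht
    have hstep : aPow ω (m + 1) (interleave x y) = aWedge (aPow ω m) ω t := rfl
    rw [hstep, aWedge_apply]
    -- the distinguished permutations
    set ρ : Fin (m + 1) → Equiv.Perm (Fin (2 * m + 2)) :=
      (fun j => (finRotate (2 * m + 2)) ^ (2 * j.val + 2)) with hρ
    set σs : Fin (m + 1) → Equiv.Perm (Fin (2 * m) ⊕ Fin 2) :=
      (fun j => Equiv.permCongr finSumFinEquiv.symm (ρ j)) with hσs
    have hpos : ∀ (j : Fin (m + 1)) (s : Fin (2 * m) ⊕ Fin 2),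
        (finSumFinEquiv (σs j s)).val
          = ((finSumFinEquiv s).val + (2 * j.val + 2)) % (2 * m + 2) := by
      intro j s
      simp only [hσs, hρ, Equiv.permCongr_apply, Equiv.apply_symm_apply, Equiv.symm_symm]
      rw [finRotate_pow_val _ _ (by omega)]
    have hposl : ∀ (j : Fin (m + 1)) (i : Fin (2 * m)),
        (finSumFinEquiv (σs j (Sum.inl i))).val = (i.val + (2 * j.val + 2)) % (2 * m + 2) := by
      intro j i; rw [hpos]; simp
    have hposr : ∀ (j : Fin (m + 1)) (b : Fin 2),
        (finSumFinEquiv (σs j (Sum.inr b))).val = 2 * j.val + b.val := by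
      intro j b; rw [hpos]
      have hb := b.isLt
      have hj := j.isLt
      have hcast : (finSumFinEquiv (Sum.inr b : Fin (2 * m) ⊕ Fin 2)).val = 2 * m + b.val := by
        simp
      rw [hcast]
      have : 2 * m + b.val + (2 * j.val + 2) = (2 * j.val + b.val) + (2 * m + 2) * 1 := by ring
      rw [this, Nat.add_mul_mod_self_left]
      exact Nat.mod_eq_of_lt (by omega)
    -- off-image terms vanish
    have hoff : ∀ q ∈ (Finset.univ : Finset (Equiv.Perm.ModSumCongr (Fin (2 * m)) (Fin 2))),
        q ∉ (fun j : Fin (m + 1) => (Quotient.mk'' (σs j) :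
              Equiv.Perm.ModSumCongr (Fin (2 * m)) (Fin 2)))
            '' ↑(Finset.univ : Finset (Fin (m + 1))) →
        (TensorProduct.lid ℝ ℝ) (AlternatingMap.domCoprod.summand (aPow ω m) ω q
          (fun s => t (finSumFinEquiv s))) = 0 := by
      intro q _ hq
      refine Quotient.inductionOn' q (fun σ hq => ?_) hq
      rw [summand_apply]
      by_cases hw : ω (fun i => t (finSumFinEquiv (σ (Sum.inr i)))) = 0
      · rw [hw, mul_zero, smul_zero]
      · exfalso
        apply hq
        -- analyse the two positions fed to ω
        set P0 : Fin (2 * m + 2) := finSumFinEquiv (σ (Sum.inr 0)) with hP0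
        set P1 : Fin (2 * m + 2) := finSumFinEquiv (σ (Sum.inr 1)) with hP1
        have hwP : ω ![t P0, t P1] ≠ 0 := by
          intro hc
          apply hw
          rw [fin2_eta (fun i => t (finSumFinEquiv (σ (Sum.inr i))))]
          exact hc
        have hclass := interleave_pair ω x y hxy hxx hyy
          ⟨P0.val, by have := P0.isLt; omega⟩ ⟨P1.val, by have := P1.isLt; omega⟩
          (by
            have e0 : interleave x y ⟨P0.val, by have := P0.isLt; omega⟩ = t P0 := rfl
            have e1 : interleave x y ⟨P1.val, by have := P1.isLt; omega⟩ = t P1 := rfl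
            rw [e0, e1]; exact hwP)
        -- in either case we identify the coset
        rcases hclass with ⟨he, hsucc⟩ | ⟨he, hsucc⟩
        · -- P0 = 2j, P1 = 2j+1
          have he' : P0.val % 2 = 0 := he
          have hsucc' : P1.val = P0.val + 1 := hsucc
          have hlt := P0.isLt
          set j : Fin (m + 1) := ⟨P0.val / 2, by omega⟩ with hj
          refine ⟨j, by simp, ?_⟩
          apply Quotient.sound'
          rw [QuotientGroup.leftRel_apply]
          have h0 : σ (Sum.inr 0) = σs j (Sum.inr 0) := by
            apply finSumFinEquiv.injective
            apply Fin.ext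
            rw [hposr, ← hP0]
            show P0.val = 2 * (P0.val / 2) + (0 : Fin 2).val
            simp; omega
          have h1 : σ (Sum.inr 1) = σs j (Sum.inr 1) := by
            apply finSumFinEquiv.injective
            apply Fin.ext
            rw [hposr, ← hP1]
            show P1.val = 2 * (P0.val / 2) + (1 : Fin 2).val
            simp; omega
          refine mem_sumCongrHom_range _ (fun b => ?_)
          by_cases hb : b = 0
          · subst hb
            exact ⟨0, by rw [Equiv.Perm.mul_apply, h0, ← Equiv.Perm.mul_apply, inv_mul_cancel, Equiv.Perm.one_apply]⟩
          · have hb1 : b = 1 := by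
              have := b.isLt
              have : b.val ≠ 0 := fun h => hb (Fin.ext h)
              exact Fin.ext (by omega)
            subst hb1
            exact ⟨1, by rw [Equiv.Perm.mul_apply, h1, ← Equiv.Perm.mul_apply, inv_mul_cancel, Equiv.Perm.one_apply]⟩
        · -- P1 = 2j, P0 = 2j+1
          have he' : P1.val % 2 = 0 := he
          have hsucc' : P0.val = P1.val + 1 := hsucc
          have hlt := P1.isLt
          set j : Fin (m + 1) := ⟨P1.val / 2, by omega⟩ with hj
          refine ⟨j, by simp, ?_⟩
          apply Quotient.sound'
          rw [QuotientGroup.leftRel_apply]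
          have h0 : σ (Sum.inr 0) = σs j (Sum.inr 1) := by
            apply finSumFinEquiv.injective
            apply Fin.ext
            rw [hposr, ← hP0]
            show P0.val = 2 * (P1.val / 2) + (1 : Fin 2).val
            simp; omega
          have h1 : σ (Sum.inr 1) = σs j (Sum.inr 0) := by
            apply finSumFinEquiv.injective
            apply Fin.ext
            rw [hposr, ← hP1]
            show P1.val = 2 * (P1.val / 2) + (0 : Fin 2).val
            simp; omega
          refine mem_sumCongrHom_range _ (fun b => ?_)
          by_cases hb : b = 0
          · subst hb
            exact ⟨1, by rw [Equiv.Perm.mul_apply, h0, ← Equiv.Perm.mul_apply, inv_mul_cancel, Equiv.Perm.one_apply]⟩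
          · have hb1 : b = 1 := by
              have := b.isLt
              have : b.val ≠ 0 := fun h => hb (Fin.ext h)
              exact Fin.ext (by omega)
            subst hb1
            exact ⟨0, by rw [Equiv.Perm.mul_apply, h1, ← Equiv.Perm.mul_apply, inv_mul_cancel, Equiv.Perm.one_apply]⟩
    -- injectivity
    have hinj : Set.InjOn (fun j : Fin (m + 1) => (Quotient.mk'' (σs j) :
          Equiv.Perm.ModSumCongr (Fin (2 * m)) (Fin 2)))
        ↑(Finset.univ : Finset (Fin (m + 1))) := by
      intro j _ j' _ hjj'
      have hrel := QuotientGroup.leftRel_apply.mp (Quotient.exact' hjj')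
      obtain ⟨⟨π, τ⟩, hπτ⟩ := hrel
      have hev : σs j' (Sum.inr 0) = σs j (Sum.inr (τ 0)) := by
        have : σs j * ((σs j)⁻¹ * σs j') = σs j' := by group
        rw [← this, ← hπτ]
        simp [Equiv.Perm.sumCongrHom, Equiv.Perm.mul_apply]
      have hv := congrArg (fun z => (finSumFinEquiv z).val) hev
      rw [hposr, hposr] at hv
      have := (τ 0).isLt
      exact Fin.ext (by omega)
    -- value of each surviving term
    have hterm : ∀ j : Fin (m + 1),
        (TensorProduct.lid ℝ ℝ) (AlternatingMap.domCoprod.summand (aPow ω m) ω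
          (Quotient.mk'' (σs j)) (fun s => t (finSumFinEquiv s))) = (Nat.factorial m : ℝ) := by
      intro j
      rw [summand_apply]
      -- the sign is 1
      have hsign : Equiv.Perm.sign (σs j) = 1 := by
        rw [hσs]
        simp only [Equiv.Perm.sign_permCongr, hρ, map_pow]
        have h1 : (2 * m + 2) = (2 * m + 1) + 1 := rfl
        rw [h1, sign_finRotate, ← pow_mul]
        exact Even.neg_one_pow ⟨(2 * m + 1) * (j.val + 1), by rw [Nat.add_sub_cancel]; ring⟩
      rw [hsign, one_smul]
      -- the shifted families
      set wrap : Fin m → Fin (m + 1) :=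
        (fun a => ⟨(a.val + j.val + 1) % (m + 1), Nat.mod_lt _ (Nat.succ_pos m)⟩) with hwrap
      have hwinj : Function.Injective wrap := by
        intro a b hab
        have h1 : (a.val + (j.val + 1)) % (m + 1) = (b.val + (j.val + 1)) % (m + 1) := by
          have := congrArg Fin.val hab
          simp only [hwrap] at this
          convert this using 2 <;> ring
        have h2 : a.val % (m + 1) = b.val % (m + 1) :=
          Nat.ModEq.add_right_cancel' (j.val + 1) h1
        rw [Nat.mod_eq_of_lt (by omega), Nat.mod_eq_of_lt (by omega)] at h2
        exact Fin.ext h2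
      -- the a-part is the interleave of the shifted families
      have hapart : (fun i => t (finSumFinEquiv (σs j (Sum.inl i))))
          = interleave (x ∘ wrap) (y ∘ wrap) := by
        funext i
        have hi := i.isLt
        have hval : (finSumFinEquiv (σs j (Sum.inl i))).val
            = (i.val + (2 * j.val + 2)) % (2 * m + 2) := hposl j i
        rcases Nat.even_or_odd i.val with ⟨c, hc⟩ | ⟨c, hc⟩
        · -- even position
          have hkey : (i.val + (2 * j.val + 2)) % (2 * m + 2)
              = 2 * ((c + j.val + 1) % (m + 1)) := by
            have h2 : 2 * m + 2 = 2 * (m + 1) := by ring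
            have : i.val + (2 * j.val + 2) = 2 * (c + j.val + 1) + 0 := by omega
            rw [this, h2, key_mod _ _ _ (by omega) (by omega)]
            omega
          have hl : t (finSumFinEquiv (σs j (Sum.inl i)))
              = x ⟨(c + j.val + 1) % (m + 1), Nat.mod_lt _ (Nat.succ_pos m)⟩ := by
            rw [ht]
            exact interleave_even x y _ _ (by rw [hval, hkey])
          rw [hl, interleave_even (x ∘ wrap) (y ∘ wrap) i ⟨c, by omega⟩
            (show i.val = 2 * c by omega)]
          simp only [Function.comp_apply, hwrap]
        · -- odd position
          have hkey : (i.val + (2 * j.val + 2)) % (2 * m + 2)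
              = 2 * ((c + j.val + 1) % (m + 1)) + 1 := by
            have h2 : 2 * m + 2 = 2 * (m + 1) := by ring
            have : i.val + (2 * j.val + 2) = 2 * (c + j.val + 1) + 1 := by omega
            rw [this, h2, key_mod _ _ _ (by omega) (by omega)]
          have hl : t (finSumFinEquiv (σs j (Sum.inl i)))
              = y ⟨(c + j.val + 1) % (m + 1), Nat.mod_lt _ (Nat.succ_pos m)⟩ := by
            rw [ht]
            exact interleave_odd x y _ _ (by rw [hval, hkey])
          rw [hl, interleave_odd (x ∘ wrap) (y ∘ wrap) i ⟨c, by omega⟩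
            (show i.val = 2 * c + 1 by omega)]
          simp only [Function.comp_apply, hwrap]
      -- the ω-part is `ω ![x j, y j] = 1`
      have hbpart : (fun i => t (finSumFinEquiv (σs j (Sum.inr i)))) = ![x j, y j] := by
        rw [fin2_eta (fun i => t (finSumFinEquiv (σs j (Sum.inr i))))]
        have h0 : t (finSumFinEquiv (σs j (Sum.inr 0))) = x j := by
          rw [ht]
          refine interleave_even x y _ j ?_
          rw [hposr]; simp
        have h1 : t (finSumFinEquiv (σs j (Sum.inr 1))) = y j := by
          rw [ht]
          refine interleave_odd x y _ j ?_
          rw [hposr]; simp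
        rw [h0, h1]
      rw [hapart, hbpart, hxy, if_pos rfl, mul_one]
      exact ih (x ∘ wrap) (y ∘ wrap)
        (fun a b => by rw [Function.comp_apply, Function.comp_apply, hxy]
                       by_cases hab : a = b
                       · rw [if_pos hab, if_pos (by rw [hab])]
                       · rw [if_neg hab, if_neg (fun h => hab (hwinj h))])
        (fun a b => hxx _ _) (fun a b => hyy _ _)
    have hsum := Finset.sum_of_injOn
      (e := fun j : Fin (m + 1) => (Quotient.mk'' (σs j) :
        Equiv.Perm.ModSumCongr (Fin (2 * m)) (Fin 2)))
      (f := fun _ : Fin (m + 1) => (Nat.factorial m : ℝ))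
      (g := fun q => (TensorProduct.lid ℝ ℝ) (AlternatingMap.domCoprod.summand (aPow ω m) ω q
          (fun s => t (finSumFinEquiv s))))
      hinj (fun i _ => Finset.mem_coe.mpr (Finset.mem_univ _)) hoff
      (fun j _ => (hterm j).symm)
    rw [← hsum, Finset.sum_const, Finset.card_univ, Fintype.card_fin]
    rw [Nat.factorial_succ]
    push_cast
    ring

lemma omega_eta (ω : V [⋀^Fin 2]→ₗ[ℝ] ℝ) (w : Fin 2 → V) : ω w = ω ![w 0, w 1] :=
  congrArg (fun v => ω v) (fin2_eta w)

lemma aPow_eq_zero (ω : V [⋀^Fin 2]→ₗ[ℝ] ℝ) (g : V)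
    (hg : ∀ z, ω ![z, g] = 0) (hg' : ∀ z, ω ![g, z] = 0) :
    ∀ (m : ℕ) (w : Fin (2 * m) → V), (∃ j, w j = g) → aPow ω m w = 0 := by
  intro m
  induction m with
  | zero =>
    rintro w ⟨j, -⟩
    exact absurd j.isLt (by omega)
  | succ m ih =>
    rintro w ⟨j, hj⟩
    have hstep : aPow ω (m + 1) w
        = aWedge (aPow ω m) ω (fun k : Fin (2 * m + 2) => w ⟨k.val, by
            have := k.isLt; omega⟩) := rfl
    rw [hstep]
    refine aWedge_eq_zero _ _ g (fun w' hw' => ih w' hw') ?_ _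
      ⟨⟨j.val, by have := j.isLt; omega⟩, by
        have : (⟨j.val, by have := j.isLt; omega⟩ : Fin (2 * (m + 1))) = j := Fin.ext rfl
        rw [this, hj]⟩
    rintro w' ⟨i, hi⟩
    by_cases h0 : i = 0
    · subst h0
      rw [omega_eta, hi]
      exact hg' _
    · have h1 : i = 1 := by
        have hlt := i.isLt
        have : i.val ≠ 0 := fun h => h0 (Fin.ext h)
        exact Fin.ext (by omega)
      subst h1
      rw [omega_eta, hi]
      exact hg _

end Stmt12

/-- on `M = T*Q × ℝ` with coordinates `(qⁱ, pᵢ, S)`, with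
`η = -(∂H/∂S) dS - F^fr` and `ω = dqⁱ ∧ dpᵢ`, the pair `(ω, η)` is a
partially cosymplectic structure (`ω` closed, `ω^n ∧ η ≠ 0`), regardless of
the expression of the semibasic friction force `F^fr`. -/


theorem stmt_12 (n : ℕ)
    (ω : (Phase n) [⋀^Fin 2]→ₗ[ℝ] ℝ)
    (hω : ∀ u w : Phase n, ω ![u, w] = ∑ i, (u.1 i * w.2.1 i - w.1 i * u.2.1 i))
    (H : Phase n → ℝ) (hH : ContDiff ℝ (⊤ : ℕ∞) H)
    (hHS : ∀ x, fderiv ℝ H x (0, 0, 1) ≠ 0)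
    (Ffr : Phase n → Fin n → ℝ)
    (η : Phase n → (Phase n →ₗ[ℝ] ℝ))
    (hη : ∀ x u, η x u = -(fderiv ℝ H x (0, 0, 1)) * u.2.2 - ∑ i, Ffr x i * u.1 i) :
    (∀ x u v w : Phase n, extDerTwo (fun _ => ω) x u v w = 0) ∧
    (∀ x, volForm ω n 1 (fun _ => η x) ≠ 0) := by
  constructor
  · intro x u v w
    simp [extDerTwo]
  · intro x0 hzero
    -- basis vectors of `Phase n`
    set ee : Fin n → Phase n := fun i => (Pi.single i 1, 0, 0) with hee
    set ff : Fin n → Phase n := fun i => (0, Pi.single i 1, 0) with hff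
    set g : Phase n := (0, 0, 1) with hgdef
    have hg1 : ∀ z : Phase n, ω ![z, g] = 0 := by
      intro z; rw [hω]; simp [hgdef]
    have hg2 : ∀ z : Phase n, ω ![g, z] = 0 := by
      intro z; rw [hω]; simp [hgdef]
    have hxy : ∀ a b, ω ![ee a, ff b] = if a = b then 1 else 0 := by
      intro a b
      rw [hω]
      simp only [hee, hff, Pi.single_apply, Pi.zero_apply, mul_zero, zero_mul, sub_zero,
        ite_mul, one_mul]
      rw [Finset.sum_ite_eq' Finset.univ a (fun i => if i = b then (1 : ℝ) else 0)]
      simp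
    have hxx : ∀ a b, ω ![ee a, ee b] = 0 := by
      intro a b; rw [hω]; simp [hee]
    have hyy : ∀ a b, ω ![ff a, ff b] = 0 := by
      intro a b; rw [hω]; simp [hff]
    -- evaluate the claimed-zero form at a well-chosen tuple
    set T : Fin (2 * n + 1) → Phase n := Fin.snoc (Stmt12.interleave ee ff) g with hT
    have happ : volForm ω n 1 (fun _ => η x0) T = 0 := by rw [hzero]; simp
    have hlast : T (Fin.last (2 * n)) = g := by rw [hT]; simp
    have hcast : (fun i : Fin (2 * n) => T i.castSucc) = Stmt12.interleave ee ff := by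
      funext i; rw [hT]; simp
    have hval : volForm ω n 1 (fun _ => η x0) T
        = aPow ω n (fun i => T i.castSucc) * (η x0) (T (Fin.last (2 * n))) := by
      refine Stmt12.aWedge_oneForm_apply (aPow ω n) (η x0) T ?_
      rintro w ⟨jj, hjj⟩
      refine Stmt12.aPow_eq_zero ω g hg1 hg2 n w ⟨jj, ?_⟩
      rw [hjj, hlast]
    have hfac : aPow ω n (fun i => T i.castSucc) = (Nat.factorial n : ℝ) := by
      rw [hcast]
      exact Stmt12.aPow_interleave ω n ee ff hxy hxx hyy
    have hηg : (η x0) (T (Fin.last (2 * n))) = -(fderiv ℝ H x0 (0, 0, 1)) := by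
      rw [hlast, hη]
      simp [hgdef]
    rw [hval, hfac, hηg] at happ
    have h1 : (Nat.factorial n : ℝ) ≠ 0 := by
      exact_mod_cast Nat.factorial_ne_zero n
    have h2 : -(fderiv ℝ H x0 (0, 0, 1)) ≠ 0 := neg_ne_zero.mpr (hHS x0)
    exact (mul_ne_zero h1 h2) happ
end

section
/- With M = T*Q × ℝ, ω = dq^i ∧ dp_i, η = −(∂H/∂S) dS − F^fr, F^ext a semibasic 1-form, and E_H the unique vector field with i_{E_H} ω + η(E_H) η = dH + η − F^ext, every integral curve (q(t), p(t), S(t)) of E_H satisfies dq^i/dt = ∂H/∂p_i, dp_i/dt = −∂H/∂q^i + F^fr_i + F^ext_i, and dS/dt = −(1/(∂H/∂S)) Σ_j (∂H/∂p_j) F^fr_j. -/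
/-- the integral curves of the evolution vector field `E_H`,
defined by `i_{E_H} ω + η(E_H) η = dH + η - F^ext`, satisfy the equations of
motion of an adiabatically closed simple thermodynamic system. -/
theorem stmt_13 (n : ℕ)
    (ω : (Phase n) [⋀^Fin 2]→ₗ[ℝ] ℝ)
    (hω : ∀ u w : Phase n, ω ![u, w] = ∑ i, (u.1 i * w.2.1 i - w.1 i * u.2.1 i))
    (H : Phase n → ℝ) (hH : ContDiff ℝ (⊤ : ℕ∞) H)
    (hHS : ∀ x, fderiv ℝ H x (0, 0, 1) ≠ 0)
    (Ffr Fext : Phase n → Fin n → ℝ)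
    (η : Phase n → (Phase n →ₗ[ℝ] ℝ))
    (hη : ∀ x u, η x u = -(fderiv ℝ H x (0, 0, 1)) * u.2.2 - ∑ i, Ffr x i * u.1 i)
    (EH : Phase n → Phase n)
    (hEH : ∀ x w, ω ![EH x, w] + η x (EH x) * η x w
        = fderiv ℝ H x w + η x w - ∑ i, Fext x i * w.1 i)
    (c : ℝ → Phase n) (hc : ∀ t, HasDerivAt c (EH (c t)) t) :
    ∀ t,
      (∀ i, deriv (fun s => (c s).1 i) t = fderiv ℝ H (c t) (0, Pi.single i 1, 0)) ∧
      (∀ i, deriv (fun s => (c s).2.1 i) t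
          = - fderiv ℝ H (c t) (Pi.single i 1, 0, 0) + Ffr (c t) i + Fext (c t) i) ∧
      deriv (fun s => (c s).2.2) t
        = -(1 / fderiv ℝ H (c t) (0, 0, 1)) *
            ∑ j, fderiv ℝ H (c t) (0, Pi.single j 1, 0) * Ffr (c t) j := by
  intro t
  set x := c t with hx
  -- component derivatives of the curve
  have hder : ∀ (L : Phase n →L[ℝ] ℝ), deriv (fun s => L (c s)) t = L (EH x) := by
    intro L
    exact (L.hasFDerivAt.comp_hasDerivAt t (hc t)).deriv
  have hq : ∀ i, deriv (fun s => (c s).1 i) t = (EH x).1 i := fun i =>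
    hder ((ContinuousLinearMap.proj i).comp (ContinuousLinearMap.fst ℝ _ _))
  have hp : ∀ i, deriv (fun s => (c s).2.1 i) t = (EH x).2.1 i := fun i =>
    hder ((ContinuousLinearMap.proj i).comp
      ((ContinuousLinearMap.fst ℝ _ _).comp (ContinuousLinearMap.snd ℝ _ _)))
  have hs : deriv (fun s => (c s).2.2) t = (EH x).2.2 :=
    hder ((ContinuousLinearMap.snd ℝ _ _).comp (ContinuousLinearMap.snd ℝ _ _))
  -- extract the components of E_H from its defining equation
  have e1 := hEH x ((0:Fin n → ℝ), (0:Fin n → ℝ), (1:ℝ))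
  simp [hω, hη] at e1
  have hA : (fderiv ℝ H x) (0, 0, 1) * (EH x).2.2 + ∑ j, Ffr x j * (EH x).1 j = 0 := by
    rcases e1 with h | h
    · linarith
    · exact absurd h (hHS x)
  have e2 : ∀ i, (EH x).1 i = (fderiv ℝ H x) (0, Pi.single i 1, 0) := by
    intro i
    have := hEH x ((0:Fin n → ℝ), Pi.single i 1, (0:ℝ))
    simpa [hω, hη, Pi.single_apply, mul_ite, Finset.sum_ite_eq'] using this
  have e3 : ∀ i, (EH x).2.1 i
      = - (fderiv ℝ H x) (Pi.single i 1, 0, 0) + Ffr x i + Fext x i := by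
    intro i
    have h := hEH x ((Pi.single i 1 : Fin n → ℝ), (0:Fin n → ℝ), (0:ℝ))
    simp [hω, hη, Pi.single_apply, mul_ite, ite_mul, Finset.sum_ite_eq'] at h
    have hz : -((fderiv ℝ H x) (0, 0, 1) * (EH x).2.2) - ∑ j, Ffr x j * (EH x).1 j = 0 := by
      linarith
    rw [hz, zero_mul, neg_zero, add_zero] at h
    simp only [Prod.mk_zero_zero] at h ⊢
    linarith
  have e4 : (EH x).2.2 = -(1 / (fderiv ℝ H x) (0, 0, 1)) *
      ∑ j, (fderiv ℝ H x) (0, Pi.single j 1, 0) * Ffr x j := by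
    have hS := hHS x
    field_simp
    have : ∑ j, Ffr x j * (EH x).1 j = ∑ j, (fderiv ℝ H x) (0, Pi.single j 1, 0) * Ffr x j := by
      refine Finset.sum_congr rfl fun j _ => ?_
      rw [e2 j, mul_comm]
    linarith [hA, this]
  refine ⟨fun i => by rw [hq i, e2 i], fun i => by rw [hp i, e3 i], by rw [hs, e4]⟩
end

section
/- Along every integral curve of the thermodynamic evolution vector field E_H of an adiabatically closed simple system, the entropy production identity −(∂H/∂S)(dS/dt) = Σ_j (dq^j/dt) F^fr_j holds. -/
/-- along every integral curve of the thermodynamic evolution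
vector field `E_H`, the entropy production identity
`-(∂H/∂S)(dS/dt) = Σ_j (dqʲ/dt) F^fr_j` holds. -/
theorem stmt_14 (n : ℕ)
    (ω : (Phase n) [⋀^Fin 2]→ₗ[ℝ] ℝ)
    (hω : ∀ u w : Phase n, ω ![u, w] = ∑ i, (u.1 i * w.2.1 i - w.1 i * u.2.1 i))
    (H : Phase n → ℝ) (hH : ContDiff ℝ (⊤ : ℕ∞) H)
    (hHS : ∀ x, fderiv ℝ H x (0, 0, 1) ≠ 0)
    (Ffr Fext : Phase n → Fin n → ℝ)
    (η : Phase n → (Phase n →ₗ[ℝ] ℝ))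
    (hη : ∀ x u, η x u = -(fderiv ℝ H x (0, 0, 1)) * u.2.2 - ∑ i, Ffr x i * u.1 i)
    (EH : Phase n → Phase n)
    (hEH : ∀ x w, ω ![EH x, w] + η x (EH x) * η x w
        = fderiv ℝ H x w + η x w - ∑ i, Fext x i * w.1 i)
    (c : ℝ → Phase n) (hc : ∀ t, HasDerivAt c (EH (c t)) t) :
    ∀ t, -(fderiv ℝ H (c t) (0, 0, 1)) * deriv (fun s => (c s).2.2) t
        = ∑ j, deriv (fun s => (c s).1 j) t * Ffr (c t) j := by
  intro t
  -- derivatives of components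
  have hS : deriv (fun s => (c s).2.2) t = (EH (c t)).2.2 := by
    have h := (((ContinuousLinearMap.snd ℝ (Fin n → ℝ) ℝ).comp
        (ContinuousLinearMap.snd ℝ (Fin n → ℝ) ((Fin n → ℝ) × ℝ))).hasFDerivAt.comp_hasDerivAt t (hc t))
    simpa [Function.comp_def] using h.deriv
  have hq : ∀ j, deriv (fun s => (c s).1 j) t = (EH (c t)).1 j := by
    intro j
    have h := (((ContinuousLinearMap.proj j : (Fin n → ℝ) →L[ℝ] ℝ).comp
      (ContinuousLinearMap.fst ℝ (Fin n → ℝ) ((Fin n → ℝ) × ℝ))).hasFDerivAt.comp_hasDerivAt t (hc t))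
    simpa [Function.comp_def] using h.deriv
  -- plug w = (0,0,1) into hEH
  have key := hEH (c t) (0, 0, 1)
  have hω0 : ω ![EH (c t), ((0, 0, 1) : Phase n)] = 0 := by
    rw [hω]; simp
  have hη1 : η (c t) ((0, 0, 1) : Phase n) = -(fderiv ℝ H (c t) (0, 0, 1)) := by
    rw [hη]; simp
  rw [hω0, hη1] at key
  simp only [zero_add] at key
  have key2 : η (c t) (EH (c t)) * (-(fderiv ℝ H (c t) (0, 0, 1))) = 0 := by
    rw [key]; ring_nf; simp
  have hη0 : η (c t) (EH (c t)) = 0 := by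
    rcases mul_eq_zero.1 key2 with h | h
    · exact h
    · exact absurd (neg_eq_zero.1 h) (hHS (c t))
  rw [hη (c t) (EH (c t))] at hη0
  rw [hS]
  have := sub_eq_zero.1 hη0
  rw [this]
  exact Finset.sum_congr rfl (fun j _ => by rw [hq j]; ring
)
end
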